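/- arXiv:1501.00645 — 2 statements merged into one kernel-verified Lean document; each statement's English description precedes it below -/
import Mathlib

section
/- Let (X_x)_{x∈ℝ} be a family of nonnegative, identically distributed, non-trivial (not a.s. zero) random variables on a probability space, and let f : ℝ → [0,∞) be measurable. If P(∫_ℝ f(x) X_x dx < ∞) = 1, then ∫_ℝ f(x) dx < ∞. -/
/-!
Choose `c > 0` with `δ := P (c ≤ X₀) > 0`; by identical distribution `P (c ≤ Xₓ) = δ` for
every `x`. Since `G := ∫ f(x) Xₓ dx` is a.s. finite, the event `A := {G ≤ n}` has
`P Aᶜ < δ` for some `n`, so `P ({c ≤ Xₓ} ∩ A) ≥ ε := δ - P Aᶜ > 0` uniformly in `x`.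
Tonelli then gives `c ε ∫ f ≤ E[G; A] ≤ n`.
-/

open MeasureTheory ProbabilityTheory ENNReal Set Function Filter Topology

section

variable {α Ω : Type*} [MeasurableSpace α] [MeasurableSpace Ω] {ν : Measure α} {P : Measure Ω}

theorem exists_measure_setOf_le_ne_zero_of_not_ae_eq_zero {Y : Ω → ℝ≥0∞}
    (hY : ¬ ∀ᵐ ω ∂P, Y ω = 0) : ∃ c ≠ 0, P {ω | c ≤ Y ω} ≠ 0 := by
  have hcover : {ω | ¬ Y ω = 0} ⊆ ⋃ n : ℕ, {ω | (n : ℝ≥0∞)⁻¹ ≤ Y ω} := fun ω hω ↦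
    have ⟨n, hn⟩ := ENNReal.exists_inv_nat_lt hω
    mem_iUnion.2 ⟨n, hn.le⟩
  obtain ⟨n, hn⟩ := exists_measure_pos_of_not_measure_iUnion_null
    fun h0 ↦ hY (ae_iff.2 (measure_mono_null hcover h0))
  exact ⟨_, ENNReal.inv_ne_zero.2 (natCast_ne_top n), hn.ne'⟩

theorem exists_nat_meas_gt_lt_of_ae_lt_top [IsFiniteMeasure P] {G : Ω → ℝ≥0∞} (hG : Measurable G)
    (h : ∀ᵐ ω ∂P, G ω < ∞) {ε : ℝ≥0∞} (hε : 0 < ε) : ∃ n : ℕ, P {ω | (n : ℝ≥0∞) < G ω} < ε := by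
  have hinter : ⋂ n : ℕ, {ω | (n : ℝ≥0∞) < G ω} = G ⁻¹' {∞} := by
    rw [← iInter_Ioi_coe_nat, preimage_iInter]
    rfl
  have hnull : P (G ⁻¹' {∞}) = 0 :=
    measure_mono_null (fun ω (hω : G ω = ∞) ↦ hω.ge.not_gt) (ae_iff.1 h)
  have htendsto : Tendsto (fun n : ℕ ↦ P {ω | (n : ℝ≥0∞) < G ω}) atTop (𝓝 0) := by
    rw [← hnull, ← hinter]
    exact tendsto_measure_iInter_atTop (fun n ↦ (hG measurableSet_Ioi).nullMeasurableSet)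
      (fun m n hmn ↦ ofPred_subset_ofPred.2 fun ω hω ↦ (Nat.cast_le.2 hmn).trans_lt hω)
      ⟨0, measure_ne_top _ _⟩
  exact (htendsto.eventually (gt_mem_nhds hε)).exists

theorem lintegral_mul_meas_ge_le_setLIntegral_lintegral [SFinite ν] [SFinite P]
    {F : α → ℝ≥0∞} (hF : Measurable F) {Y : α → Ω → ℝ≥0∞} (hY : Measurable (uncurry Y))
    {A : Set Ω} (hA : MeasurableSet A) (c : ℝ≥0∞) :
    ∫⁻ x, F x * (c * P ({ω | c ≤ Y x ω} ∩ A)) ∂ν ≤ ∫⁻ ω in A, ∫⁻ x, F x * Y x ω ∂ν ∂P := by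
  have hYx (x : α) : Measurable (Y x) := hY.comp measurable_prodMk_left
  rw [lintegral_lintegral_swap
    ((hF.comp measurable_snd).mul (hY.comp measurable_swap)).aemeasurable]
  refine lintegral_mono fun x ↦ ?_
  rw [lintegral_const_mul _ (hYx x), ← Measure.restrict_apply' hA]
  gcongr
  exact mul_meas_ge_le_lintegral₀ (hYx x).aemeasurable c

theorem lintegral_lt_top_of_ae_lintegral_mul_lt_top [SFinite ν] [IsFiniteMeasure P]
    {F : α → ℝ≥0∞} (hF : Measurable F) {Y : α → Ω → ℝ≥0∞} (hY : Measurable (uncurry Y))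
    {c δ : ℝ≥0∞} (hc : c ≠ 0) (hδ : δ ≠ 0) (hYc : ∀ x, δ ≤ P {ω | c ≤ Y x ω})
    (h : ∀ᵐ ω ∂P, ∫⁻ x, F x * Y x ω ∂ν < ∞) : ∫⁻ x, F x ∂ν < ∞ := by
  set G : Ω → ℝ≥0∞ := fun ω ↦ ∫⁻ x, F x * Y x ω ∂ν
  have hG : Measurable G := ((hF.comp measurable_fst).mul hY).lintegral_prod_left'
  obtain ⟨n, hn⟩ := exists_nat_meas_gt_lt_of_ae_lt_top hG h (pos_iff_ne_zero.2 hδ)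
  set A := {ω | G ω ≤ n}
  have hAc : Aᶜ = {ω | (n : ℝ≥0∞) < G ω} := by ext; simp [A]
  set ε := δ - P Aᶜ
  have hε : ε ≠ 0 := (tsub_pos_of_lt (hAc ▸ hn)).ne'
  have hεle : ∀ x, ε ≤ P ({ω | c ≤ Y x ω} ∩ A) := fun x ↦ calc
    ε ≤ P {ω | c ≤ Y x ω} - P Aᶜ := tsub_le_tsub_right (hYc x) _
    _ ≤ P ({ω | c ≤ Y x ω} \ Aᶜ) := le_measure_sdiff
    _ = P ({ω | c ≤ Y x ω} ∩ A) := by rw [sdiff_compl]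
  have hbound : c * ε * ∫⁻ x, F x ∂ν ≤ n * P A := calc
    c * ε * ∫⁻ x, F x ∂ν = ∫⁻ x, F x * (c * ε) ∂ν := by rw [lintegral_mul_const _ hF, mul_comm]
    _ ≤ ∫⁻ x, F x * (c * P ({ω | c ≤ Y x ω} ∩ A)) ∂ν := by gcongr with x; exact hεle x
    _ ≤ ∫⁻ ω in A, G ω ∂P :=
      lintegral_mul_meas_ge_le_setLIntegral_lintegral hF hY (hG measurableSet_Iic) c
    _ ≤ ∫⁻ _ in A, (n : ℝ≥0∞) ∂P := setLIntegral_mono measurable_const fun _ hω ↦ hω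
    _ = n * P A := setLIntegral_const _ _
  refine lt_top_iff_ne_top.2 fun htop ↦ ?_
  rw [htop, mul_top (mul_ne_zero hc hε)] at hbound
  exact (mul_lt_top (natCast_lt_top n) (measure_lt_top P A)).not_ge hbound

end

theorem jeulin_lemma_general {Ω : Type*} [MeasurableSpace Ω] (P : Measure Ω) [IsProbabilityMeasure P]
    (X : ℝ → Ω → ℝ) (hXmeas : Measurable (Function.uncurry X))
    (hXnonneg : ∀ x ω, 0 ≤ X x ω)
    (hXid : ∀ x : ℝ, P.map (X x) = P.map (X 0))
    (hXnontriv : ¬ (∀ᵐ ω ∂P, X 0 ω = 0))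
    (f : ℝ → ℝ) (hf : Measurable f)
    (h : P {ω | ∫⁻ x : ℝ, ENNReal.ofReal (f x * X x ω) < ∞} = 1) :
    ∫⁻ x : ℝ, ENNReal.ofReal (f x) < ∞ := by
  have hX : ∀ x, Measurable (X x) := fun x ↦ hXmeas.comp measurable_prodMk_left
  have hY : Measurable (uncurry fun x ω ↦ ENNReal.ofReal (X x ω)) := measurable_ofReal.comp hXmeas
  obtain ⟨c, hc, hδ⟩ := exists_measure_setOf_le_ne_zero_of_not_ae_eq_zero
    (Y := fun ω ↦ ENNReal.ofReal (X 0 ω)) fun h0 ↦ hXnontriv <| h0.mono fun ω hω ↦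
      le_antisymm (ENNReal.ofReal_eq_zero.1 hω) (hXnonneg 0 ω)
  have hYc : ∀ x, P {ω | c ≤ ENNReal.ofReal (X x ω)} = P {ω | c ≤ ENNReal.ofReal (X 0 ω)} :=
    fun x ↦ (IdentDistrib.comp ⟨(hX x).aemeasurable, (hX 0).aemeasurable, hXid x⟩
      measurable_ofReal).measure_mem_eq measurableSet_Ici
  simp only [ENNReal.ofReal_mul' (hXnonneg _ _)] at h
  refine lintegral_lt_top_of_ae_lintegral_mul_lt_top hf.ennreal_ofReal hY hc hδ
    (fun x ↦ (hYc x).ge) ?_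
  have hG := ((hf.ennreal_ofReal.comp measurable_fst).mul hY).lintegral_prod_left' (μ := volume)
  exact (ae_iff_measure_eq (hG measurableSet_Iio).nullMeasurableSet).2 (h.trans measure_univ.symm)

/-- Jeulin's lemma (simple version): if `(X x)` is a jointly measurable family of
nonnegative, identically distributed, non-trivial random variables and
`∫ f x * X x dx < ∞` almost surely, then `∫ f < ∞`. -/
theorem jeulin_lemma {Ω : Type*} [MeasurableSpace Ω] (P : Measure Ω) [IsProbabilityMeasure P]
    (X : ℝ → Ω → ℝ) (hXmeas : Measurable (Function.uncurry X))
    (hXnonneg : ∀ x ω, 0 ≤ X x ω)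
    (hXid : ∀ x : ℝ, P.map (X x) = P.map (X 0))
    (hXnontriv : ¬ (∀ᵐ ω ∂P, X 0 ω = 0))
    (f : ℝ → ℝ) (hf : Measurable f) (hf0 : ∀ x, 0 ≤ f x)
    (h : P {ω | ∫⁻ x : ℝ, ENNReal.ofReal (f x * X x ω) < ∞} = 1) :
    ∫⁻ x : ℝ, ENNReal.ofReal (f x) < ∞ :=
  jeulin_lemma_general P X hXmeas hXnonneg hXid hXnontriv f hf h
end

section
/- Let (X_x)_{x∈ℝ} be identically distributed nonnegative random variables with P(X_0 > ε) = δ > 0 for some ε > 0, and f : ℝ → [0,∞) measurable. If there exists an event A with P(A) > 1 − δ/2 on which ∫_ℝ f(x) X_x dx ≤ N for some constant N, then ∫_ℝ f(x) dx ≤ 2N/(εδ). -/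
open MeasureTheory ProbabilityTheory ENNReal

/-!
By Markov's inequality and `P(Aᶜ) ≤ δ/2`, every `X x` satisfies
`E[X x; A] ≥ ε P({X x > ε} ∩ A) ≥ εδ/2`. Integrating `f x X x` over `A × ℝ` and swapping the
order of integration (Tonelli) gives `(εδ/2) ∫ f ≤ E[∫ f x X x dx; A] ≤ N`.
-/

theorem ENNReal.ofReal_mul_ofReal_le (p q : ℝ) :
    ENNReal.ofReal p * ENNReal.ofReal q ≤ ENNReal.ofReal (p * q) := by
  rcases le_or_gt 0 p with hp | hp
  · exact (ENNReal.ofReal_mul hp).ge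
  · simp [ENNReal.ofReal_of_nonpos hp.le]

theorem ENNReal.one_sub_ofReal_one_sub_le (t : ℝ) :
    1 - ENNReal.ofReal (1 - t) ≤ ENNReal.ofReal t := by
  rw [tsub_le_iff_right]
  calc (1 : ℝ≥0∞) = ENNReal.ofReal (t + (1 - t)) := by simp
    _ ≤ ENNReal.ofReal t + ENNReal.ofReal (1 - t) := ENNReal.ofReal_add_le

section

variable {Ω : Type*} [MeasurableSpace Ω] {P : Measure Ω} {A : Set Ω}

theorem prob_compl_le_of_ofReal_one_sub_le [IsProbabilityMeasure P] (hA : MeasurableSet A)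
    {t : ℝ} (h : ENNReal.ofReal (1 - t) ≤ P A) : P Aᶜ ≤ ENNReal.ofReal t := by
  rw [prob_compl_eq_one_sub hA]
  exact (tsub_le_tsub_left h 1).trans (ENNReal.one_sub_ofReal_one_sub_le t)

theorem le_measure_inter_of_measure_compl_le {S : Set Ω} {a b : ℝ≥0∞} (hb : b ≠ ∞)
    (hS : a + b ≤ P S) (hA : P Aᶜ ≤ b) : a ≤ P (S ∩ A) := by
  refine (ENNReal.add_le_add_iff_right hb).1 (hS.trans ?_)
  calc P S ≤ P (S ∩ A) + P (S \ A) := measure_le_inter_add_sdiff P S A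
    _ ≤ P (S ∩ A) + b := by
      gcongr
      exact (measure_mono fun ω hω => hω.2).trans hA

theorem ofReal_mul_measure_inter_le_setLIntegral {g : Ω → ℝ} (hg : Measurable g) (ε : ℝ)
    (A : Set Ω) :
    ENNReal.ofReal ε * P ({ω | ε < g ω} ∩ A) ≤ ∫⁻ ω in A, ENNReal.ofReal (g ω) ∂P := by
  have hsub : {ω | ε < g ω} ⊆ {ω | ENNReal.ofReal ε ≤ ENNReal.ofReal (g ω)} :=
    fun ω hω => ENNReal.ofReal_le_ofReal (le_of_lt hω)
  calc ENNReal.ofReal ε * P ({ω | ε < g ω} ∩ A)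
      ≤ ENNReal.ofReal ε * P.restrict A {ω | ENNReal.ofReal ε ≤ ENNReal.ofReal (g ω)} :=
        mul_le_mul_right ((measure_mono (Set.inter_subset_inter_left A hsub)).trans
          (Measure.le_restrict_apply _ _)) _
    _ ≤ ∫⁻ ω in A, ENNReal.ofReal (g ω) ∂P :=
      mul_meas_ge_le_lintegral₀ hg.ennreal_ofReal.aemeasurable _

theorem ofReal_mul_half_le_setLIntegral {g : Ω → ℝ} (hg : Measurable g) {ε δ : ℝ}
    (hε : 0 ≤ ε) (hδ : 0 ≤ δ) (hgε : P {ω | ε < g ω} = ENNReal.ofReal δ)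
    (hA : P Aᶜ ≤ ENNReal.ofReal (δ / 2)) :
    ENNReal.ofReal (ε * (δ / 2)) ≤ ∫⁻ ω in A, ENNReal.ofReal (g ω) ∂P := by
  have hhalf : ENNReal.ofReal (δ / 2) + ENNReal.ofReal (δ / 2) ≤ P {ω | ε < g ω} := by
    rw [hgε, ← ENNReal.ofReal_add (by linarith) (by linarith), add_halves]
  calc ENNReal.ofReal (ε * (δ / 2)) = ENNReal.ofReal ε * ENNReal.ofReal (δ / 2) :=
        ENNReal.ofReal_mul hε
    _ ≤ ENNReal.ofReal ε * P ({ω | ε < g ω} ∩ A) := by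
        gcongr
        exact le_measure_inter_of_measure_compl_le ENNReal.ofReal_ne_top hhalf hA
    _ ≤ ∫⁻ ω in A, ENNReal.ofReal (g ω) ∂P := ofReal_mul_measure_inter_le_setLIntegral hg ε A

theorem mul_lintegral_le_mul_measure_of_forall_le_setLIntegral {α : Type*} [MeasurableSpace α]
    {μ : Measure α} [SFinite μ] [SFinite P] (hA : MeasurableSet A) {F : α → Ω → ℝ≥0∞}
    (hF : Measurable (Function.uncurry F)) {g : α → ℝ≥0∞} {c N : ℝ≥0∞}
    (hlow : ∀ x, c * g x ≤ ∫⁻ ω in A, F x ω ∂P) (hup : ∀ ω ∈ A, ∫⁻ x, F x ω ∂μ ≤ N) :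
    c * ∫⁻ x, g x ∂μ ≤ N * P A :=
  calc c * ∫⁻ x, g x ∂μ ≤ ∫⁻ x, c * g x ∂μ := lintegral_const_mul_le c g
    _ ≤ ∫⁻ x, ∫⁻ ω in A, F x ω ∂P ∂μ := lintegral_mono hlow
    _ = ∫⁻ ω in A, ∫⁻ x, F x ω ∂μ ∂P := lintegral_lintegral_swap hF.aemeasurable
    _ ≤ ∫⁻ _ in A, N ∂P := setLIntegral_mono' hA hup
    _ = N * P A := setLIntegral_const A N

end

theorem jeulin_quantitative_general {Ω : Type*} [MeasurableSpace Ω] (P : Measure Ω)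
    [IsProbabilityMeasure P]
    (X : ℝ → Ω → ℝ) (hXmeas : Measurable (Function.uncurry X))
    (hXid : ∀ x : ℝ, P.map (X x) = P.map (X 0))
    (ε δ : ℝ) (hε : 0 < ε) (hδ : 0 < δ)
    (hXε : P {ω | ε < X 0 ω} = ENNReal.ofReal δ)
    (f : ℝ → ℝ) (hf : Measurable f)
    (A : Set Ω) (hA : MeasurableSet A) (hPA : ENNReal.ofReal (1 - δ / 2) < P A)
    (N : ℝ)
    (hbound : ∀ ω ∈ A, ∫⁻ x : ℝ, ENNReal.ofReal (f x * X x ω) ≤ ENNReal.ofReal N) :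
    ∫⁻ x : ℝ, ENNReal.ofReal (f x) ≤ ENNReal.ofReal (2 * N / (ε * δ)) := by
  have hXx (x : ℝ) : Measurable (X x) := hXmeas.comp measurable_prodMk_left
  have hXxε (x : ℝ) : P {ω | ε < X x ω} = ENNReal.ofReal δ :=
    (IdentDistrib.measure_mem_eq ⟨(hXx x).aemeasurable, (hXx 0).aemeasurable, hXid x⟩
      measurableSet_Ioi).trans hXε
  have hAc : P Aᶜ ≤ ENNReal.ofReal (δ / 2) := prob_compl_le_of_ofReal_one_sub_le hA hPA.le
  have hlow (x : ℝ) : ENNReal.ofReal (ε * (δ / 2)) * ENNReal.ofReal (f x)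
      ≤ ∫⁻ ω in A, ENNReal.ofReal (f x * X x ω) ∂P :=
    calc ENNReal.ofReal (ε * (δ / 2)) * ENNReal.ofReal (f x)
        ≤ ENNReal.ofReal (f x) * ∫⁻ ω in A, ENNReal.ofReal (X x ω) ∂P := by
          rw [mul_comm]
          gcongr
          exact ofReal_mul_half_le_setLIntegral (hXx x) hε.le hδ.le (hXxε x) hAc
      _ = ∫⁻ ω in A, ENNReal.ofReal (f x) * ENNReal.ofReal (X x ω) ∂P :=
          (lintegral_const_mul' _ _ ENNReal.ofReal_ne_top).symm
      _ ≤ ∫⁻ ω in A, ENNReal.ofReal (f x * X x ω) ∂P :=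
          lintegral_mono fun ω => ENNReal.ofReal_mul_ofReal_le _ _
  have hF : Measurable (Function.uncurry fun x ω => ENNReal.ofReal (f x * X x ω)) :=
    ((hf.comp measurable_fst).mul hXmeas).ennreal_ofReal
  have hmain := (mul_lintegral_le_mul_measure_of_forall_le_setLIntegral hA hF hlow hbound).trans
    (mul_le_of_le_one_right' prob_le_one)
  have hc : 0 < ε * (δ / 2) := by positivity
  rwa [show 2 * N / (ε * δ) = N / (ε * (δ / 2)) by field_simp, ENNReal.ofReal_div_of_pos hc,
    ENNReal.le_div_iff_mul_le (Or.inl (ENNReal.ofReal_pos.2 hc).ne') (Or.inl ENNReal.ofReal_ne_top),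
    mul_comm]

/-- Quantitative core of Jeulin's lemma: if `P(X x > ε) = δ` for all `x`, and on an
event `A` with `P(A) > 1 - δ/2` we have `∫ f x * X x dx ≤ N`, then
`∫ f ≤ 2N/(εδ)`. -/
theorem jeulin_quantitative {Ω : Type*} [MeasurableSpace Ω] (P : Measure Ω)
    [IsProbabilityMeasure P]
    (X : ℝ → Ω → ℝ) (hXmeas : Measurable (Function.uncurry X))
    (hXnonneg : ∀ x ω, 0 ≤ X x ω)
    (hXid : ∀ x : ℝ, P.map (X x) = P.map (X 0))
    (ε δ : ℝ) (hε : 0 < ε) (hδ : 0 < δ)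
    (hXε : P {ω | ε < X 0 ω} = ENNReal.ofReal δ)
    (f : ℝ → ℝ) (hf : Measurable f) (hf0 : ∀ x, 0 ≤ f x)
    (A : Set Ω) (hA : MeasurableSet A) (hPA : ENNReal.ofReal (1 - δ / 2) < P A)
    (N : ℝ) (hN : 0 ≤ N)
    (hbound : ∀ ω ∈ A, ∫⁻ x : ℝ, ENNReal.ofReal (f x * X x ω) ≤ ENNReal.ofReal N) :
    ∫⁻ x : ℝ, ENNReal.ofReal (f x) ≤ ENNReal.ofReal (2 * N / (ε * δ)) :=
  jeulin_quantitative_general P X hXmeas hXid ε δ hε hδ hXε f hf A hA hPA N hbound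
end
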